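/- Let A be the arrangement cell attached to an arrangement on n points, and let π, φ, π', φ' be permutations of {1,…,n} such that p(π, φ) and p(π', φ') both lie in A. Then the straight-line path from p(π, φ) to p(π', φ') lies in OC_n, and it is homotopic relative to endpoints, through paths in OC_n, to the piecewise linear path that goes in a straight line from p(π, φ) to p(π', φ) and then in a straight line from p(π', φ) to p(π', φ'). -/

import Mathlib

/-- An arrangement on `n` points: a pair of strict partial orders on `Fin n`
such that any two distinct indices are comparable in at least one of them. -/
def IsArrangement {n : ℕ} (rRe rIm : Fin n → Fin n → Prop) : Prop :=
  (∀ i, ¬ rRe i i) ∧ (∀ i j k, rRe i j → rRe j k → rRe i k) ∧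
  (∀ i, ¬ rIm i i) ∧ (∀ i j k, rIm i j → rIm j k → rIm i k) ∧
  (∀ i j, i ≠ j → rRe i j ∨ rRe j i ∨ rIm i j ∨ rIm j i)

/-- The arrangement cell attached to a pair of relations. -/
def cell {n : ℕ} (rRe rIm : Fin n → Fin n → Prop) : Set (Fin n → ℂ) :=
  {z | (∀ i j, rRe i j → (z i).re < (z j).re) ∧
       (∀ i j, rIm i j → (z i).im < (z j).im)}

/-- The ordered configuration space of `n` points in `ℂ`. -/
def OC (n : ℕ) : Set (Fin n → ℂ) := {z | Function.Injective z}

/-- The permutation point `p(π, φ)`: `k`-th coordinate is `π(k) + φ(k)·i`,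
where `π(k), φ(k)` take values in `{1, …, n}`. -/
noncomputable def permPoint {n : ℕ} (π φ : Equiv.Perm (Fin n)) : Fin n → ℂ :=
  fun k => (((π k : ℕ) + 1 : ℝ) : ℂ) + (((φ k : ℕ) + 1 : ℝ) : ℂ) * Complex.I

/-- Straight-line segment from `a` to `b`, parametrized on `[0,1]`. -/
noncomputable def seg {n : ℕ} (a b : Fin n → ℂ) (t : ℝ) : Fin n → ℂ :=
  fun k => ((1 - t : ℝ) : ℂ) * a k + (t : ℂ) * b k

/-- The piecewise linear path `a → b → c`, parametrized on `[0,1]`. -/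
noncomputable def pwPath {n : ℕ} (a b c : Fin n → ℂ) (t : ℝ) : Fin n → ℂ :=
  if t ≤ 1/2 then seg a b (2 * t) else seg b c (2 * t - 1)

/-!
The cell is cut out by strict inequalities between real parts and between imaginary parts of
coordinates, so it is convex, and comparability of distinct indices makes its points injective.
The real constraints only see real parts and the imaginary ones only imaginary parts, so the
corner `p(π', φ)`, with the real parts of `p(π', φ')` and the imaginary parts of `p(π, φ)`, lies
in the cell as well. Hence both paths stay in the convex cell, and so does the straight-line
homotopy between them.
-/

theorem convex_setOf_lt_of_linearMap {𝕜 E β : Type*} [Semiring 𝕜] [PartialOrder 𝕜]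
    [AddCommMonoid E] [Module 𝕜 E] [AddCommGroup β] [PartialOrder β] [IsOrderedAddMonoid β]
    [Module 𝕜 β] [PosSMulStrictMono 𝕜 β] (f g : E →ₗ[𝕜] β) :
    Convex 𝕜 {x | f x < g x} := by
  simpa only [LinearMap.sub_apply, sub_pos] using convex_halfSpace_gt (g - f).isLinear 0

theorem convex_setOf_re_lt {ι : Type*} (i j : ι) :
    Convex ℝ {z : ι → ℂ | (z i).re < (z j).re} :=
  convex_setOf_lt_of_linearMap (Complex.reLm ∘ₗ .proj (φ := fun _ => ℂ) i)
    (Complex.reLm ∘ₗ .proj (φ := fun _ => ℂ) j)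

theorem convex_setOf_im_lt {ι : Type*} (i j : ι) :
    Convex ℝ {z : ι → ℂ | (z i).im < (z j).im} :=
  convex_setOf_lt_of_linearMap (Complex.imLm ∘ₗ .proj (φ := fun _ => ℂ) i)
    (Complex.imLm ∘ₗ .proj (φ := fun _ => ℂ) j)

section Paths

variable {n : ℕ}

theorem seg_eq_lineMap (a b : Fin n → ℂ) (t : ℝ) : seg a b t = AffineMap.lineMap a b t := by
  ext k
  simp [seg, AffineMap.lineMap_apply_module, Complex.real_smul]

@[simp] theorem seg_zero (a b : Fin n → ℂ) : seg a b 0 = a := by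
  simp [seg_eq_lineMap]

@[simp] theorem seg_one (a b : Fin n → ℂ) : seg a b 1 = b := by
  simp [seg_eq_lineMap]

@[simp] theorem seg_self (a : Fin n → ℂ) (t : ℝ) : seg a a t = a := by
  simp [seg_eq_lineMap]

@[simp] theorem pwPath_zero (a b c : Fin n → ℂ) : pwPath a b c 0 = a := by
  simp [pwPath]

@[simp] theorem pwPath_one (a b c : Fin n → ℂ) : pwPath a b c 1 = c := by
  norm_num [pwPath]

@[fun_prop] theorem Continuous.seg {X : Type*} [TopologicalSpace X] {a b : X → Fin n → ℂ}
    {t : X → ℝ} (ha : Continuous a) (hb : Continuous b) (ht : Continuous t) :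
    Continuous fun x => seg (a x) (b x) (t x) := by
  simp only [seg_eq_lineMap]
  fun_prop

@[fun_prop] theorem continuous_pwPath (a b c : Fin n → ℂ) : Continuous (pwPath a b c) := by
  refine Continuous.if_le (by fun_prop) (by fun_prop) continuous_id continuous_const ?_
  intro t ht
  norm_num [ht]

theorem Convex.seg_mem {s : Set (Fin n → ℂ)} (hs : Convex ℝ s) {a b : Fin n → ℂ} (ha : a ∈ s)
    (hb : b ∈ s) {t : ℝ} (ht : t ∈ Set.Icc 0 1) : seg a b t ∈ s := by
  rw [seg_eq_lineMap]
  exact hs.lineMap_mem ha hb ht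

theorem Convex.pwPath_mem {s : Set (Fin n → ℂ)} (hs : Convex ℝ s) {a b c : Fin n → ℂ}
    (ha : a ∈ s) (hb : b ∈ s) (hc : c ∈ s) {t : ℝ} (ht : t ∈ Set.Icc 0 1) :
    pwPath a b c t ∈ s := by
  unfold pwPath
  split_ifs with h
  · exact hs.seg_mem ha hb ⟨by linarith [ht.1], by linarith⟩
  · exact hs.seg_mem hb hc ⟨by linarith, by linarith [ht.2]⟩

end Paths

section Cells

variable {n : ℕ} {rRe rIm : Fin n → Fin n → Prop}

theorem convex_cell : Convex ℝ (cell rRe rIm) := fun _ hx _ hy _ _ ha hb hab =>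
  ⟨fun i j hij => convex_setOf_re_lt i j (hx.1 i j hij) (hy.1 i j hij) ha hb hab,
    fun i j hij => convex_setOf_im_lt i j (hx.2 i j hij) (hy.2 i j hij) ha hb hab⟩

theorem mem_cell_of_re_of_im {u v w : Fin n → ℂ} (hu : u ∈ cell rRe rIm)
    (hv : v ∈ cell rRe rIm) (hre : ∀ k, (w k).re = (u k).re) (him : ∀ k, (w k).im = (v k).im) :
    w ∈ cell rRe rIm :=
  ⟨fun i j hij => by simpa only [hre] using hu.1 i j hij,
    fun i j hij => by simpa only [him] using hv.2 i j hij⟩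

theorem cell_subset_OC (h : IsArrangement rRe rIm) : cell rRe rIm ⊆ OC n := by
  intro z hz i j hij
  by_contra hne
  rcases h.2.2.2.2 i j hne with hr | hr | hr | hr
  · exact (hz.1 i j hr).ne (by rw [hij])
  · exact (hz.1 j i hr).ne (by rw [hij])
  · exact (hz.2 i j hr).ne (by rw [hij])
  · exact (hz.2 j i hr).ne (by rw [hij])

end Cells

theorem permPoint_re {n : ℕ} (π φ : Equiv.Perm (Fin n)) (k : Fin n) :
    (permPoint π φ k).re = (π k : ℕ) + 1 := by
  simp [permPoint]

theorem permPoint_im {n : ℕ} (π φ : Equiv.Perm (Fin n)) (k : Fin n) :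
    (permPoint π φ k).im = (φ k : ℕ) + 1 := by
  simp [permPoint]

theorem straight_line_homotopic_pw {n : ℕ} (rRe rIm : Fin n → Fin n → Prop)
    (h : IsArrangement rRe rIm) (π φ π' φ' : Equiv.Perm (Fin n))
    (h1 : permPoint π φ ∈ cell rRe rIm) (h2 : permPoint π' φ' ∈ cell rRe rIm) :
    (∀ t ∈ Set.Icc (0:ℝ) 1, seg (permPoint π φ) (permPoint π' φ') t ∈ OC n) ∧
    (∀ t ∈ Set.Icc (0:ℝ) 1,
      pwPath (permPoint π φ) (permPoint π' φ) (permPoint π' φ') t ∈ OC n) ∧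
    ∃ H : ℝ → ℝ → (Fin n → ℂ),
      ContinuousOn (fun p : ℝ × ℝ => H p.1 p.2)
        (Set.Icc (0:ℝ) 1 ×ˢ Set.Icc (0:ℝ) 1) ∧
      (∀ s ∈ Set.Icc (0:ℝ) 1, ∀ t ∈ Set.Icc (0:ℝ) 1, H s t ∈ OC n) ∧
      (∀ t ∈ Set.Icc (0:ℝ) 1, H 0 t = seg (permPoint π φ) (permPoint π' φ') t) ∧
      (∀ t ∈ Set.Icc (0:ℝ) 1,
        H 1 t = pwPath (permPoint π φ) (permPoint π' φ) (permPoint π' φ') t) ∧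
      (∀ s ∈ Set.Icc (0:ℝ) 1,
        H s 0 = permPoint π φ ∧ H s 1 = permPoint π' φ') := by
  set a := permPoint π φ
  set b := permPoint π' φ
  set c := permPoint π' φ'
  have hb : b ∈ cell rRe rIm := mem_cell_of_re_of_im h2 h1
    (fun k => by simp only [b, c, permPoint_re]) (fun k => by simp only [a, b, permPoint_im])
  have hseg : ∀ t ∈ Set.Icc (0:ℝ) 1, seg a c t ∈ cell rRe rIm :=
    fun t ht => convex_cell.seg_mem h1 h2 ht
  have hpw : ∀ t ∈ Set.Icc (0:ℝ) 1, pwPath a b c t ∈ cell rRe rIm :=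
    fun t ht => convex_cell.pwPath_mem h1 hb h2 ht
  refine ⟨fun t ht => cell_subset_OC h (hseg t ht), fun t ht => cell_subset_OC h (hpw t ht),
    fun s t => seg (seg a c t) (pwPath a b c t) s, ?_,
    fun s hs t ht => cell_subset_OC h (convex_cell.seg_mem (hseg t ht) (hpw t ht) hs),
    fun _ _ => seg_zero _ _, fun _ _ => seg_one _ _, fun s _ => by simp⟩
  exact Continuous.continuousOn (by fun_prop)
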